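/- arXiv:1708.07095 — 4 statements merged into one kernel-verified Lean document; each statement's English description precedes it below -/
import Mathlib

section
/- Closed form for the variance vector: σ² = (I - β²P)⁻¹ h, where h = r²_⊙ + 2β r ⊙ (PJ) + β² P J²_⊙ - J²_⊙ and ⊙ denotes the Hadamard (componentwise) product. -/
open Matrix

/-- Closed form for the variance vector: `σ² = (I - β²P)⁻¹ h`,
where `h = r²_⊙ + 2β r ⊙ (PJ) + β² P J²_⊙ - J²_⊙`. -/
theorem variance_closed_form
    {S : Type*} [Fintype S] [DecidableEq S]
    (P : Matrix S S ℝ)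
    (hP_nonneg : ∀ i j, 0 ≤ P i j) (hP_row : ∀ i, ∑ j, P i j = 1)
    (β : ℝ) (hβ0 : 0 < β) (hβ1 : β < 1)
    (r J h σ2 : S → ℝ)
    (hJ : J = (1 - β • P)⁻¹ *ᵥ r)
    (hh : h = (fun i => r i ^ 2) + (2 * β) • (r * (P *ᵥ J)) + β ^ 2 • (P *ᵥ fun i => J i ^ 2)
        - fun i => J i ^ 2)
    (hσ : σ2 = h + β ^ 2 • (P *ᵥ σ2)) :
    σ2 = (1 - β ^ 2 • P)⁻¹ *ᵥ h := by
  set A : Matrix S S ℝ := 1 - β ^ 2 • P with hA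
  have hβ2 : 0 < β ^ 2 := by positivity
  have hβ2lt : β ^ 2 < 1 := by nlinarith
  have hdiag : ∀ k, ∑ j ∈ Finset.univ.erase k, ‖A k j‖ < ‖A k k‖ := by
    intro k
    have hPk1 : P k k ≤ 1 := by
      have := hP_row k
      have : ∑ j ∈ Finset.univ.erase k, P k j = 1 - P k k := by
        rw [← this, Finset.sum_erase_eq_sub (Finset.mem_univ k)]
      have hnn : 0 ≤ ∑ j ∈ Finset.univ.erase k, P k j :=
        Finset.sum_nonneg fun j _ => hP_nonneg k j
      linarith
    have hAkj : ∀ j ∈ Finset.univ.erase k, ‖A k j‖ = β ^ 2 * P k j := by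
      intro j hj
      have hjk : j ≠ k := Finset.ne_of_mem_erase hj
      have : A k j = -(β ^ 2 * P k j) := by
        simp [hA, Matrix.one_apply, hjk.symm, Matrix.sub_apply]
      rw [this, norm_neg, Real.norm_eq_abs, abs_of_nonneg (mul_nonneg hβ2.le (hP_nonneg k j))]
    have hsum : ∑ j ∈ Finset.univ.erase k, ‖A k j‖ = β ^ 2 * (1 - P k k) := by
      rw [Finset.sum_congr rfl hAkj, ← Finset.mul_sum,
        Finset.sum_erase_eq_sub (Finset.mem_univ k), hP_row k]
    have hAkk : A k k = 1 - β ^ 2 * P k k := by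
      simp [hA, Matrix.one_apply, Matrix.sub_apply]
    have hApos : 0 < 1 - β ^ 2 * P k k := by nlinarith [hP_nonneg k k]
    rw [hsum, hAkk, Real.norm_eq_abs, abs_of_pos hApos]
    nlinarith [hP_nonneg k k]
  have hdet : A.det ≠ 0 := det_ne_zero_of_sum_row_lt_diag hdiag
  have hAσ : A *ᵥ σ2 = h := by
    have : σ2 - β ^ 2 • (P *ᵥ σ2) = h := by
      nth_rewrite 1 [hσ]; abel
    rw [hA, Matrix.sub_mulVec, Matrix.one_mulVec, Matrix.smul_mulVec] at *
    exact this
  calc σ2 = A⁻¹ *ᵥ (A *ᵥ σ2) := by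
        rw [Matrix.mulVec_mulVec, Matrix.nonsing_inv_mul A (isUnit_iff_ne_zero.mpr hdet),
          Matrix.one_mulVec]
      _ = A⁻¹ *ᵥ h := by rw [hAσ]
end

section
/- Constrained variance difference formula: suppose J = J' = λ (both policies have mean discounted performance λ). Define g = σ² + λ²_⊙ and f = r²_⊙ + 2β r ⊙ (Pλ), f' = r'²_⊙ + 2β r' ⊙ (P'λ). Then σ²' - σ² = (I - β²P')⁻¹ [β²(P' - P)g + f' - f]. -/
open Matrix

/-- Constrained variance difference formula: if both policies
have mean discounted performance `λ` (i.e. `r + βPλ = λ` and `r' + βP'λ = λ`),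
then with `g = σ² + λ²_⊙`, `f = r²_⊙ + 2β r ⊙ (Pλ)`, `f' = r'²_⊙ + 2β r' ⊙ (P'λ)`,
`σ²' - σ² = (I - β²P')⁻¹ [β²(P' - P)g + f' - f]`. -/
theorem constrained_variance_difference_formula
    {S : Type*} [Fintype S] [DecidableEq S]
    (P P' : Matrix S S ℝ)
    (hP_nonneg : ∀ i j, 0 ≤ P i j) (hP_row : ∀ i, ∑ j, P i j = 1)
    (hP'_nonneg : ∀ i j, 0 ≤ P' i j) (hP'_row : ∀ i, ∑ j, P' i j = 1)
    (β : ℝ) (hβ0 : 0 < β) (hβ1 : β < 1)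
    (r r' lam f f' g h h' σ2 σ2' : S → ℝ)
    (hr : r + β • (P *ᵥ lam) = lam)
    (hr' : r' + β • (P' *ᵥ lam) = lam)
    (hf : f = (fun i => r i ^ 2) + (2 * β) • (r * (P *ᵥ lam)))
    (hf' : f' = (fun i => r' i ^ 2) + (2 * β) • (r' * (P' *ᵥ lam)))
    (hh : h = f + β ^ 2 • (P *ᵥ fun i => lam i ^ 2) - fun i => lam i ^ 2)
    (hh' : h' = f' + β ^ 2 • (P' *ᵥ fun i => lam i ^ 2) - fun i => lam i ^ 2)
    (hσ : σ2 = h + β ^ 2 • (P *ᵥ σ2))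
    (hσ' : σ2' = h' + β ^ 2 • (P' *ᵥ σ2'))
    (hg : g = σ2 + fun i => lam i ^ 2) :
    σ2' - σ2 = (1 - β ^ 2 • P')⁻¹ *ᵥ (β ^ 2 • ((P' - P) *ᵥ g) + (f' - f)) := by
  have hβ2 : 0 < β ^ 2 := by positivity
  have hβ2' : β ^ 2 < 1 := by nlinarith
  -- diagonal dominance ⇒ invertibility
  have hdet : IsUnit (1 - β ^ 2 • P').det := by
    rw [isUnit_iff_ne_zero]
    apply det_ne_zero_of_sum_row_lt_diag
    intro k
    have hdiag : (1 - β ^ 2 • P') k k = 1 - β ^ 2 * P' k k := by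
      simp [Matrix.sub_apply, Matrix.one_apply, Matrix.smul_apply]
    have hPkk : P' k k ≤ 1 := by
      have := hP'_row k
      have h2 : ∑ j ∈ Finset.univ.erase k, P' k j ≥ 0 :=
        Finset.sum_nonneg fun j _ => hP'_nonneg k j
      have h3 : P' k k + ∑ j ∈ Finset.univ.erase k, P' k j = 1 := by
        rw [Finset.add_sum_erase _ _ (Finset.mem_univ k)] at *
        exact this
      linarith
    have hoff : ∀ j ∈ Finset.univ.erase k, ‖(1 - β ^ 2 • P') k j‖ = β ^ 2 * P' k j := by
      intro j hj
      have hjk : j ≠ k := Finset.ne_of_mem_erase hj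
      have : (1 - β ^ 2 • P') k j = -(β ^ 2 * P' k j) := by
        simp [Matrix.sub_apply, Matrix.one_apply, Matrix.smul_apply, Ne.symm hjk]
      rw [this, norm_neg, Real.norm_eq_abs,
        abs_of_nonneg (mul_nonneg hβ2.le (hP'_nonneg k j))]
    rw [Finset.sum_congr rfl hoff, hdiag, ← Finset.mul_sum]
    have hsum : ∑ j ∈ Finset.univ.erase k, P' k j = 1 - P' k k := by
      have := hP'_row k
      rw [← Finset.add_sum_erase _ _ (Finset.mem_univ k)] at this
      linarith
    rw [hsum, Real.norm_eq_abs, abs_of_nonneg (by nlinarith [hP'_nonneg k k])]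
    nlinarith [hP'_nonneg k k]
  -- key linear identity
  have key : (1 - β ^ 2 • P') *ᵥ (σ2' - σ2) = β ^ 2 • ((P' - P) *ᵥ g) + (f' - f) := by
    subst hf hf' hh hh' hg
    rw [Matrix.sub_mulVec, Matrix.one_mulVec, Matrix.smul_mulVec, Matrix.mulVec_sub,
      Matrix.sub_mulVec, Matrix.mulVec_add, Matrix.mulVec_add]
    linear_combination (norm := module) hσ' - hσ
  calc σ2' - σ2 = (1 - β ^ 2 • P')⁻¹ *ᵥ ((1 - β ^ 2 • P') *ᵥ (σ2' - σ2)) := by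
        rw [Matrix.mulVec_mulVec, Matrix.nonsing_inv_mul _ hdet, Matrix.one_mulVec]
    _ = (1 - β ^ 2 • P')⁻¹ *ᵥ (β ^ 2 • ((P' - P) *ᵥ g) + (f' - f)) := by rw [key]
end

section
/- Monotone improvement: if σ² = h + β²Pσ², σ²' = h' + β²P'σ²', and the vector β²(P' - P)σ² + h' - h is componentwise ≤ 0, then σ²' ≤ σ² componentwise. Moreover, if additionally at some state i the i-th component of β²(P' - P)σ² + h' - h is strictly negative and all entries of (I - β²P')⁻¹ are positive, then σ²'(i) < σ²(i). -/
open Matrix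

/-- Monotone improvement.  If `σ² = h + β²Pσ²`,
`σ²' = h' + β²P'σ²'`, and `β²(P' - P)σ² + h' - h ≤ 0` componentwise, then
`σ²' ≤ σ²` componentwise; moreover if all entries of `(I - β²P')⁻¹` are
positive and the `i`-th component of the bracket is strictly negative, then
`σ²'(i) < σ²(i)`. -/
theorem variance_monotone_improvement
    {S : Type*} [Fintype S] [DecidableEq S]
    (P P' : Matrix S S ℝ)
    (hP_nonneg : ∀ i j, 0 ≤ P i j) (hP_row : ∀ i, ∑ j, P i j = 1)
    (hP'_nonneg : ∀ i j, 0 ≤ P' i j) (hP'_row : ∀ i, ∑ j, P' i j = 1)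
    (β : ℝ) (hβ0 : 0 < β) (hβ1 : β < 1)
    (h h' σ2 σ2' : S → ℝ)
    (hσ : σ2 = h + β ^ 2 • (P *ᵥ σ2))
    (hσ' : σ2' = h' + β ^ 2 • (P' *ᵥ σ2'))
    (hle : ∀ j, (β ^ 2 • ((P' - P) *ᵥ σ2) + (h' - h)) j ≤ 0) :
    (∀ j, σ2' j ≤ σ2 j) ∧
      ((∀ i j, 0 < (1 - β ^ 2 • P')⁻¹ i j) →
        ∀ i, (β ^ 2 • ((P' - P) *ᵥ σ2) + (h' - h)) i < 0 → σ2' i < σ2 i) := by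
  set g : S → ℝ := β ^ 2 • ((P' - P) *ᵥ σ2) + (h' - h) with hg
  have hβ2 : 0 < β ^ 2 := by positivity
  have hβ2lt : β ^ 2 < 1 := by nlinarith
  -- pointwise forms of the fixed-point equations
  have hσp : ∀ j, σ2 j = h j + β ^ 2 * ∑ k, P j k * σ2 k := by
    intro j
    have := congrFun hσ j
    simpa [Matrix.mulVec, dotProduct] using this
  have hσ'p : ∀ j, σ2' j = h' j + β ^ 2 * ∑ k, P' j k * σ2' k := by
    intro j
    have := congrFun hσ' j
    simpa [Matrix.mulVec, dotProduct] using this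
  have hgp : ∀ j, g j = β ^ 2 * (∑ k, P' j k * σ2 k - ∑ k, P j k * σ2 k)
      + (h' j - h j) := by
    intro j
    simp [hg, Matrix.mulVec, dotProduct, Matrix.sub_apply, sub_mul,
      Finset.sum_sub_distrib, mul_sub]
  -- the key linear relation: d' = g + β² P' d'  where d' = σ2' - σ2
  have key : ∀ j, σ2' j - σ2 j = g j + β ^ 2 * ∑ k, P' j k * (σ2' k - σ2 k) := by
    intro j
    have h1 := hσp j
    have h2 := hσ'p j
    have h3 := hgp j
    have : ∑ k, P' j k * (σ2' k - σ2 k)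
        = ∑ k, P' j k * σ2' k - ∑ k, P' j k * σ2 k := by
      simp [mul_sub, Finset.sum_sub_distrib]
    rw [this]; linarith
  -- Part 1: maximum principle
  have part1 : ∀ j, σ2' j ≤ σ2 j := by
    cases isEmpty_or_nonempty S with
    | inl hS => intro j; exact (hS.false j).elim
    | inr hS =>
      obtain ⟨m, _, hm⟩ := Finset.exists_max_image Finset.univ
        (fun j => σ2' j - σ2 j) ⟨Classical.arbitrary S, Finset.mem_univ _⟩
      have hPd : ∑ k, P' m k * (σ2' k - σ2 k) ≤ σ2' m - σ2 m := by
        calc ∑ k, P' m k * (σ2' k - σ2 k)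
            ≤ ∑ k, P' m k * (σ2' m - σ2 m) := by
              apply Finset.sum_le_sum
              intro k _
              exact mul_le_mul_of_nonneg_left (hm k (Finset.mem_univ k))
                (hP'_nonneg m k)
          _ = σ2' m - σ2 m := by rw [← Finset.sum_mul, hP'_row m, one_mul]
      have hkey := key m
      have hgm := hle m
      have hmle : σ2' m - σ2 m ≤ 0 := by nlinarith
      intro j
      have := hm j (Finset.mem_univ j)
      linarith
  refine ⟨part1, ?_⟩
  intro hpos i hgi
  set A : Matrix S S ℝ := 1 - β ^ 2 • P' with hA
  -- A *ᵥ (σ2 - σ2') = -g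
  have hAd : A *ᵥ (σ2 - σ2') = -g := by
    funext j
    have hkey := key j
    simp only [hA, Matrix.mulVec, dotProduct, Matrix.sub_apply, Matrix.one_apply,
      Matrix.smul_apply, smul_eq_mul, Pi.sub_apply, Pi.neg_apply]
    have : ∑ k, ((if j = k then (1:ℝ) else 0) - β ^ 2 * P' j k) * (σ2 k - σ2' k)
        = (σ2 j - σ2' j) - β ^ 2 * ∑ k, P' j k * (σ2 k - σ2' k) := by
      simp [sub_mul, Finset.sum_sub_distrib, ite_mul, Finset.mul_sum,
        Finset.sum_ite_eq, mul_assoc]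
    rw [this]
    have h4 : ∑ k, P' j k * (σ2 k - σ2' k) = -∑ k, P' j k * (σ2' k - σ2 k) := by
      rw [← Finset.sum_neg_distrib]
      congr 1; funext k; ring
    rw [h4]; linarith
  -- A is invertible (else A⁻¹ = 0, contradicting positivity)
  have hdet : IsUnit A.det := by
    by_contra hnd
    have h0 := hpos i i
    rw [Matrix.nonsing_inv_apply_not_isUnit A hnd] at h0
    simp at h0
  have hd : σ2 - σ2' = A⁻¹ *ᵥ (-g) := by
    rw [← hAd, Matrix.mulVec_mulVec, Matrix.nonsing_inv_mul A hdet, Matrix.one_mulVec]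
  have hdi : σ2 i - σ2' i = ∑ j, A⁻¹ i j * (-g j) := by
    have := congrFun hd i
    simpa [Matrix.mulVec, dotProduct] using this
  have hsum : 0 < ∑ j, A⁻¹ i j * (-g j) := by
    apply Finset.sum_pos'
    · intro j _
      exact mul_nonneg (le_of_lt (hpos i j)) (by have := hle j; linarith)
    · exact ⟨i, Finset.mem_univ i, mul_pos (hpos i i) (by linarith)⟩
  linarith
end

section
/- Optimality of deterministic policies over mixtures: suppose for each state i a finite family of pairs (p_a, f_a)_{a ∈ A(i)} is given, and the deterministic minimum d* achieves, for the fixed point g* = σ²* + λ²_⊙, the componentwise minimum of a ↦ β² ∑_j p(j|i,a) g*(j) + f(i,a). Then for any randomized mixture θ, the resulting variance vector σ²(θ) solving its β²-discounted Poisson equation satisfies σ²(θ) ≥ σ²(d*) componentwise. -/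
open Matrix

/-- Optimality of deterministic policies over mixtures: if the
deterministic policy `d*` achieves, for `g* = σ²(d*) + λ²_⊙`, the componentwise
minimum of `a ↦ β² ∑_j p(j|i,a) g*(j) + f(i,a)` over `A_λ(i)`, then for any
randomized mixture `θ` the resulting variance vector `σ²(θ)` satisfies
`σ²(θ) ≥ σ²(d*)` componentwise. -/
theorem deterministic_optimal_over_mixtures
    {S α : Type*} [Fintype S] [DecidableEq S]
    (Alam : S → Finset α) (p : S → α → S → ℝ) (r : S → α → ℝ)
    (β : ℝ) (hβ0 : 0 < β) (hβ1 : β < 1)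
    (hp_nonneg : ∀ i a, a ∈ Alam i → ∀ j, 0 ≤ p i a j)
    (hp_row : ∀ i a, a ∈ Alam i → ∑ j, p i a j = 1)
    (lam : S → ℝ)
    (hAlam : ∀ i, ∀ a ∈ Alam i, r i a + β * ∑ j, p i a j * lam j = lam i)
    (f : S → α → ℝ)
    (hf : ∀ i a, f i a = r i a ^ 2 + 2 * β * r i a * ∑ j, p i a j * lam j)
    (dstar : S → α) (hdstar : ∀ i, dstar i ∈ Alam i)
    (θ : S → α → ℝ)
    (hθ0 : ∀ i a, 0 ≤ θ i a)
    (hθ1 : ∀ i, ∑ a ∈ Alam i, θ i a = 1)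
    (σd σθ : S → ℝ)
    -- β²-discounted Poisson equation for d*: σ²(d*) + λ²_⊙ = f(d*) + β² P(d*) (σ²(d*) + λ²_⊙)
    (hσd : ∀ i, σd i + lam i ^ 2
      = f i (dstar i) + β ^ 2 * ∑ j, p i (dstar i) j * (σd j + lam j ^ 2))
    -- β²-discounted Poisson equation for the mixture θ:
    (hσθ : ∀ i, σθ i + lam i ^ 2
      = (∑ a ∈ Alam i, θ i a * f i a)
        + β ^ 2 * ∑ j, (∑ a ∈ Alam i, θ i a * p i a j) * (σθ j + lam j ^ 2))
    -- d* achieves the componentwise minimum at g* = σ²(d*) + λ²_⊙: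
    (hmin : ∀ i, ∀ a ∈ Alam i,
      β ^ 2 * ∑ j, p i (dstar i) j * (σd j + lam j ^ 2) + f i (dstar i)
        ≤ β ^ 2 * ∑ j, p i a j * (σd j + lam j ^ 2) + f i a) :
    ∀ i, σd i ≤ σθ i := by

  intro i0
  have hPθnn : ∀ i j, 0 ≤ ∑ a ∈ Alam i, θ i a * p i a j := fun i j =>
    Finset.sum_nonneg fun a ha => mul_nonneg (hθ0 i a) (hp_nonneg i a ha j)
  have hPθrow : ∀ i, ∑ j, (∑ a ∈ Alam i, θ i a * p i a j) = 1 := by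
    intro i
    rw [Finset.sum_comm]
    calc ∑ a ∈ Alam i, ∑ j, θ i a * p i a j
        = ∑ a ∈ Alam i, θ i a * ∑ j, p i a j := by
          simp [Finset.mul_sum]
      _ = ∑ a ∈ Alam i, θ i a := by
          refine Finset.sum_congr rfl fun a ha => ?_
          rw [hp_row i a ha, mul_one]
      _ = 1 := hθ1 i
  have key : ∀ i, β ^ 2 * ∑ j, (∑ a ∈ Alam i, θ i a * p i a j) * (σθ j - σd j)
      ≤ σθ i - σd i := by
    intro i
    have h1 : σd i + lam i ^ 2
        ≤ ∑ a ∈ Alam i, θ i a * (f i a + β ^ 2 * ∑ j, p i a j * (σd j + lam j ^ 2)) := by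
      calc σd i + lam i ^ 2
          = ∑ a ∈ Alam i, θ i a * (σd i + lam i ^ 2) := by
            rw [← Finset.sum_mul, hθ1 i, one_mul]
        _ ≤ _ := by
            refine Finset.sum_le_sum fun a ha => mul_le_mul_of_nonneg_left ?_ (hθ0 i a)
            have hm := hmin i a ha
            have hg := hσd i
            linarith
    have h2 : ∑ a ∈ Alam i, θ i a * (f i a + β ^ 2 * ∑ j, p i a j * (σd j + lam j ^ 2))
        = (∑ a ∈ Alam i, θ i a * f i a)
          + β ^ 2 * ∑ j, (∑ a ∈ Alam i, θ i a * p i a j) * (σd j + lam j ^ 2) := by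
      have e1 : ∀ a, θ i a * (f i a + β ^ 2 * ∑ j, p i a j * (σd j + lam j ^ 2))
          = θ i a * f i a + θ i a * (β ^ 2 * ∑ j, p i a j * (σd j + lam j ^ 2)) :=
        fun a => by ring
      simp only [e1, Finset.sum_add_distrib]
      congr 1
      calc ∑ a ∈ Alam i, θ i a * (β ^ 2 * ∑ j, p i a j * (σd j + lam j ^ 2))
          = ∑ a ∈ Alam i, ∑ j, β ^ 2 * (θ i a * (p i a j * (σd j + lam j ^ 2))) := by
            refine Finset.sum_congr rfl fun a _ => ?_
            rw [Finset.mul_sum, Finset.mul_sum]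
            exact Finset.sum_congr rfl fun j _ => by ring
        _ = ∑ j, ∑ a ∈ Alam i, β ^ 2 * (θ i a * (p i a j * (σd j + lam j ^ 2))) :=
            Finset.sum_comm
        _ = β ^ 2 * ∑ j, (∑ a ∈ Alam i, θ i a * p i a j) * (σd j + lam j ^ 2) := by
            rw [Finset.mul_sum]
            refine Finset.sum_congr rfl fun j _ => ?_
            rw [Finset.sum_mul, Finset.mul_sum]
            exact Finset.sum_congr rfl fun a _ => by ring
    have h3 := hσθ i
    have h4 : ∑ j, (∑ a ∈ Alam i, θ i a * p i a j) * (σθ j - σd j)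
        = (∑ j, (∑ a ∈ Alam i, θ i a * p i a j) * (σθ j + lam j ^ 2))
          - ∑ j, (∑ a ∈ Alam i, θ i a * p i a j) * (σd j + lam j ^ 2) := by
      rw [← Finset.sum_sub_distrib]
      refine Finset.sum_congr rfl fun j _ => ?_
      ring
    rw [h2] at h1
    rw [h4]
    nlinarith [sq_nonneg β]
  by_contra hcon
  push_neg at hcon
  obtain ⟨im, -, him⟩ := Finset.exists_min_image Finset.univ (fun j => σθ j - σd j)
    ⟨i0, Finset.mem_univ i0⟩
  have h1 := key im
  have h2 : σθ im - σd im ≤ ∑ j, (∑ a ∈ Alam im, θ im a * p im a j) * (σθ j - σd j) := by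
    calc σθ im - σd im
        = ∑ j, (∑ a ∈ Alam im, θ im a * p im a j) * (σθ im - σd im) := by
          rw [← Finset.sum_mul, hPθrow im, one_mul]
      _ ≤ _ := Finset.sum_le_sum fun j _ =>
          mul_le_mul_of_nonneg_left (him j (Finset.mem_univ j)) (hPθnn im j)
  have hβ2 : β ^ 2 < 1 := by nlinarith
  have h3 : 0 ≤ σθ im - σd im := by nlinarith [sq_nonneg β]
  have := him i0 (Finset.mem_univ i0)
  linarith
end
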